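/- Let p, q ≥ 1, δ, γ > 0, m = max{1/δ, 1, 1/γ}, λ > 0, ω_Y, ω_YX ∈ (0,1), and α > 0. Let Θ⋆ = [[S⋆−L⋆, Θ⋆_YX],[(Θ⋆_YX)ᵀ, Θ⋆_X]] be a positive-definite symmetric (p+q)×(p+q) matrix with S⋆, L⋆ ∈ S^p, Σ⋆ = (Θ⋆)⁻¹, ψ = ‖Σ⋆‖₂. Let ℍ⋆ = Ω(S⋆) × T(L⋆) × T(Θ⋆_YX) × S^q with componentwise Frobenius-orthogonal projection P_{ℍ⋆}, and let A = 𝒜† ∘ 𝕀⋆ ∘ 𝒜 where 𝕀⋆(M) = Σ⋆MΣ⋆. Assume the minimum-gain condition: Φ_{δ,γ}(P_{ℍ⋆}(A(Z))) ≥ α·Φ_{δ,γ}(Z) for every Z ∈ ℍ⋆. Let Δ = (Δ_S, Δ_L, Δ_K, Δ_O) ∈ S^p × S^p × ℝ^{p×q} × S^q satisfy: (a) support(Δ_S) ⊆ support(S⋆); (b) ‖Δ_L − P_{T(L⋆)}(Δ_L)‖₂ ≤ ω_Y·λ/(2mψ²); (c) ‖Δ_K − P_{T(Θ⋆_YX)}(Δ_K)‖₂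 ≤ ω_YX·λ/(2mψ²); (d) Φ_{δ,γ}(A(Δ)) ≤ 5λ. Then Φ_{δ,γ}(Δ) ≤ (12/α + 1/ψ²)·λ. -/

import Mathlib

/-!
Write `Δ = Z + C` with `Z = P_{ℍ⋆}(Δ) ∈ ℍ⋆`. By (a) the residual is
`C = (0, Δ_L − P_T Δ_L, Δ_K − P_T Δ_K, 0)`, so (b) and (c) bound its two nonzero blocks by
`λ / (2mψ²)` in spectral norm. As `Φ(𝒜† M) ≤ m ‖M‖₂` and `‖Σ⋆ M Σ⋆‖₂ ≤ ψ² ‖M‖₂`, this gives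
`Φ(A C) ≤ λ` and `Φ(C) ≤ λ / ψ²`. The projection `P_{ℍ⋆}` at most doubles `Φ`, because
`P_T(M) = P M + (1 − P) M Q` with orthogonal projections `P`, `Q`. Hence the minimum-gain
condition at `Z` yields `α Φ(Z) ≤ Φ(P_{ℍ⋆} A Δ) + Φ(P_{ℍ⋆} A C) ≤ 10λ + 2λ`, and
`Φ(Δ) ≤ Φ(Z) + Φ(C)` concludes.
-/


open Matrix

noncomputable section

/-- Spectral norm (largest singular value / ℓ2→ℓ2 operator norm) of a real matrix. -/
def sNorm {m n : Type*} [Fintype m] [Fintype n] [DecidableEq m] [DecidableEq n]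
    (M : Matrix m n ℝ) : ℝ :=
  ‖(Matrix.toEuclideanLin M).toContinuousLinearMap‖

/-- Entrywise sup norm `‖M‖_{ℓ∞} = max_{i,j} |M_{ij}|`. -/
def linf {m n : Type*} [Fintype m] [Fintype n] (M : Matrix m n ℝ) : ℝ :=
  ⨆ i, ⨆ j, |M i j|

/-- The orthogonal-projection matrix onto a subspace of Euclidean space. -/
def projMat {n : ℕ} (V : Submodule ℝ (EuclideanSpace ℝ (Fin n))) : Matrix (Fin n) (Fin n) ℝ :=
  Matrix.toEuclideanLin.symm (V.subtype ∘ₗ (V.orthogonalProjectionOnto).toLinearMap)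

/-- Column space of a matrix, as a subspace of Euclidean space. -/
def colSpace {m n : ℕ} (N : Matrix (Fin m) (Fin n) ℝ) : Submodule ℝ (EuclideanSpace ℝ (Fin m)) :=
  LinearMap.range (Matrix.toEuclideanLin N)

/-- Frobenius-orthogonal projection onto the tangent space `T(N)`:
`M ↦ P_c M + M P_r − P_c M P_r` with `P_c`, `P_r` the orthogonal projections onto the column
and row spaces of `N`. -/
def tanProj {m n : ℕ} (N M : Matrix (Fin m) (Fin n) ℝ) : Matrix (Fin m) (Fin n) ℝ :=
  projMat (colSpace N) * M + M * projMat (colSpace Nᵀ) -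
    projMat (colSpace N) * M * projMat (colSpace Nᵀ)

/-- Frobenius-orthogonal projection onto `Ω(S⋆)`: zero the entries outside the support. -/
def suppProj {p : ℕ} (Sstar S : Matrix (Fin p) (Fin p) ℝ) : Matrix (Fin p) (Fin p) ℝ :=
  Matrix.of fun i j => if Sstar i j = 0 then 0 else S i j

/-- An element of `S^p × S^p × ℝ^{p×q} × S^q` (symmetry imposed separately). -/
abbrev Quad (p q : ℕ) :=
  Matrix (Fin p) (Fin p) ℝ × Matrix (Fin p) (Fin p) ℝ ×
    Matrix (Fin p) (Fin q) ℝ × Matrix (Fin q) (Fin q) ℝ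

/-- The norm `Φ_{δ,γ}(S,L,K,O) = max{‖S‖_{ℓ∞}/δ, ‖L‖₂, ‖K‖₂/γ, ‖O‖₂}`. -/
def Phi {p q : ℕ} (δ γ : ℝ) (Z : Quad p q) : ℝ :=
  max (max (linf Z.1 / δ) (sNorm Z.2.1)) (max (sNorm Z.2.2.1 / γ) (sNorm Z.2.2.2))

/-- The linear map `𝒜(S,L,K,O) = [[S−L, K],[Kᵀ, O]]`. -/
def calA {p q : ℕ} (Z : Quad p q) : Matrix (Fin p ⊕ Fin q) (Fin p ⊕ Fin q) ℝ :=
  Matrix.fromBlocks (Z.1 - Z.2.1) Z.2.2.1 (Z.2.2.1)ᵀ Z.2.2.2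

/-- The adjoint `𝒜†([[Q, K],[Kᵀ, O]]) = (Q, Q, K, O)`. -/
def calAdag {p q : ℕ} (M : Matrix (Fin p ⊕ Fin q) (Fin p ⊕ Fin q) ℝ) : Quad p q :=
  (M.toBlocks₁₁, M.toBlocks₁₁, M.toBlocks₁₂, M.toBlocks₂₂)

/-- `A = 𝒜† ∘ 𝕀⋆ ∘ 𝒜`, where `𝕀⋆(M) = Σ⋆MΣ⋆` is the Fisher information at `Θ⋆`. -/
def fisherA {p q : ℕ} (Sigstar : Matrix (Fin p ⊕ Fin q) (Fin p ⊕ Fin q) ℝ) (Z : Quad p q) :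
    Quad p q :=
  calAdag (Sigstar * calA Z * Sigstar)

/-- Componentwise Frobenius-orthogonal projection onto
`ℍ⋆ = Ω(S⋆) × T(L⋆) × T(Θ⋆_YX) × S^q`. -/
def projHstar {p q : ℕ} (Sstar Lstar : Matrix (Fin p) (Fin p) ℝ)
    (Kstar : Matrix (Fin p) (Fin q) ℝ) (Z : Quad p q) : Quad p q :=
  (suppProj Sstar Z.1, tanProj Lstar Z.2.1, tanProj Kstar Z.2.2.1, Z.2.2.2)

/-- Membership of `Z` in `ℍ⋆ = Ω(S⋆) × T(L⋆) × T(Θ⋆_YX) × S^q`. -/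
def memHstar {p q : ℕ} (Sstar Lstar : Matrix (Fin p) (Fin p) ℝ)
    (Kstar : Matrix (Fin p) (Fin q) ℝ) (Z : Quad p q) : Prop :=
  Z.1.IsSymm ∧ suppProj Sstar Z.1 = Z.1 ∧
    Z.2.1.IsSymm ∧ tanProj Lstar Z.2.1 = Z.2.1 ∧
    tanProj Kstar Z.2.2.1 = Z.2.2.1 ∧ Z.2.2.2.IsSymm

open scoped Matrix.Norms.L2Operator
open Function

lemma sNorm_eq_l2_opNorm {m n : Type*} [Fintype m] [Fintype n] [DecidableEq m] [DecidableEq n]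
    (M : Matrix m n ℝ) : sNorm M = ‖M‖ := rfl

lemma EuclideanSpace.norm_sq_toLp_sum_elim {m n : Type*} [Fintype m] [Fintype n]
    (u : m → ℝ) (v : n → ℝ) :
    ‖(WithLp.toLp 2 (Sum.elim u v) : EuclideanSpace ℝ (m ⊕ n))‖ ^ 2 =
      ‖(WithLp.toLp 2 u : EuclideanSpace ℝ m)‖ ^ 2 +
        ‖(WithLp.toLp 2 v : EuclideanSpace ℝ n)‖ ^ 2 := by
  simp [EuclideanSpace.real_norm_sq_eq, Fintype.sum_sum_type]

namespace Matrix

variable {l m n o : Type*} [Fintype l] [Fintype m] [Fintype n] [Fintype o] [DecidableEq n]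

lemma l2_opNorm_le_of_mulVec_le {M : Matrix m n ℝ} {c : ℝ} (hc : 0 ≤ c)
    (h : ∀ x : EuclideanSpace ℝ n, ‖WithLp.toLp 2 (M *ᵥ x.ofLp)‖ ≤ c * ‖x‖) : ‖M‖ ≤ c :=
  ContinuousLinearMap.opNorm_le_bound _ hc h

lemma abs_apply_le_l2_opNorm (M : Matrix m n ℝ) (i : m) (j : n) : |M i j| ≤ ‖M‖ := by
  simpa [mulVec_single] using
    (PiLp.norm_apply_le _ i).trans (l2_opNorm_mulVec M (EuclideanSpace.single j 1))

variable [DecidableEq o]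

lemma l2_opNorm_one_submatrix_id_le {f : o → n} (hf : Injective f) :
    ‖(1 : Matrix n n ℝ).submatrix id f‖ ≤ 1 := by
  set S := (1 : Matrix n n ℝ).submatrix id f
  have hS : Sᴴ * S = 1 := by
    rw [conjTranspose_submatrix, conjTranspose_one]
    simpa [S] using (one_submatrix_mul f (Equiv.refl n) S).trans (submatrix_one f hf)
  have h1 : ‖(1 : Matrix o o ℝ)‖ ≤ 1 := IsStarProjection.norm_le _ (.one _)
  rw [← hS, l2_opNorm_conjTranspose_mul_self] at h1
  nlinarith [norm_nonneg S]

lemma l2_opNorm_fromBlocks_zero₁₂_zero₂₁_le (A : Matrix l n ℝ) (D : Matrix m o ℝ) :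
    ‖fromBlocks A 0 0 D‖ ≤ max ‖A‖ ‖D‖ := by
  set c := max ‖A‖ ‖D‖
  have hc : 0 ≤ c := le_max_of_le_left (norm_nonneg _)
  refine l2_opNorm_le_of_mulVec_le hc fun x => ?_
  set x₁ : EuclideanSpace ℝ n := WithLp.toLp 2 (x.ofLp ∘ Sum.inl)
  set x₂ : EuclideanSpace ℝ o := WithLp.toLp 2 (x.ofLp ∘ Sum.inr)
  have hx : ‖x‖ ^ 2 = ‖x₁‖ ^ 2 + ‖x₂‖ ^ 2 := by
    rw [← EuclideanSpace.norm_sq_toLp_sum_elim, Sum.elim_comp_inl_inr]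
  have hAx : ‖(WithLp.toLp 2 (A *ᵥ x₁.ofLp) : EuclideanSpace ℝ l)‖ ≤ c * ‖x₁‖ :=
    (l2_opNorm_mulVec A x₁).trans (by gcongr; exact le_max_left _ _)
  have hDx : ‖(WithLp.toLp 2 (D *ᵥ x₂.ofLp) : EuclideanSpace ℝ m)‖ ≤ c * ‖x₂‖ :=
    (l2_opNorm_mulVec D x₂).trans (by gcongr; exact le_max_right _ _)
  rw [← pow_le_pow_iff_left₀ (norm_nonneg _) (by positivity) two_ne_zero, fromBlocks_mulVec]
  simp only [zero_mulVec, add_zero, zero_add]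
  change ‖(WithLp.toLp 2 (Sum.elim _ _) : EuclideanSpace ℝ (l ⊕ m))‖ ^ 2 ≤ _
  rw [EuclideanSpace.norm_sq_toLp_sum_elim]
  calc _ ≤ (c * ‖x₁‖) ^ 2 + (c * ‖x₂‖) ^ 2 := by gcongr
    _ = (c * ‖x‖) ^ 2 := by rw [mul_pow, mul_pow, mul_pow, hx]; ring

variable [DecidableEq l] [DecidableEq m]

lemma l2_opNorm_submatrix_le (M : Matrix m n ℝ) {e : l → m} {f : o → n} (he : Injective e)
    (hf : Injective f) : ‖M.submatrix e f‖ ≤ ‖M‖ := by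
  have hsel : M.submatrix e f = ((1 : Matrix m m ℝ).submatrix id e)ᴴ * M *
      (1 : Matrix n n ℝ).submatrix id f := by
    rw [conjTranspose_submatrix, conjTranspose_one]
    simpa using ((congrArg (· * _) (one_submatrix_mul e (Equiv.refl m) M)).trans
      (mul_submatrix_one (Equiv.refl n) f _)).symm
  rw [hsel]
  calc _ ≤ ‖((1 : Matrix m m ℝ).submatrix id e)ᴴ‖ * ‖M‖ * ‖(1 : Matrix n n ℝ).submatrix id f‖ :=
        (l2_opNorm_mul _ _).trans (mul_le_mul_of_nonneg_right (l2_opNorm_mul _ _) (norm_nonneg _))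
    _ ≤ 1 * ‖M‖ * 1 := by
        rw [l2_opNorm_conjTranspose]
        gcongr
        exacts [l2_opNorm_one_submatrix_id_le he, l2_opNorm_one_submatrix_id_le hf]
    _ = ‖M‖ := by ring

lemma l2_opNorm_toBlocks₁₁_le (M : Matrix (l ⊕ m) (n ⊕ o) ℝ) : ‖M.toBlocks₁₁‖ ≤ ‖M‖ :=
  l2_opNorm_submatrix_le M Sum.inl_injective Sum.inl_injective

lemma l2_opNorm_toBlocks₁₂_le (M : Matrix (l ⊕ m) (n ⊕ o) ℝ) : ‖M.toBlocks₁₂‖ ≤ ‖M‖ :=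
  l2_opNorm_submatrix_le M Sum.inl_injective Sum.inr_injective

lemma l2_opNorm_toBlocks₂₂_le (M : Matrix (l ⊕ m) (n ⊕ o) ℝ) : ‖M.toBlocks₂₂‖ ≤ ‖M‖ :=
  l2_opNorm_submatrix_le M Sum.inr_injective Sum.inr_injective

lemma l2_opNorm_fromBlocks_zero₁₁_zero₂₂_le (B : Matrix l o ℝ) (C : Matrix m n ℝ) :
    ‖fromBlocks 0 B C 0‖ ≤ max ‖B‖ ‖C‖ := by
  rw [← submatrix_id_id (fromBlocks 0 B C 0), ← fromBlocks_submatrix_sum_swap_right]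
  exact (l2_opNorm_submatrix_le _ injective_id Sum.swap_leftInverse.injective).trans
    (l2_opNorm_fromBlocks_zero₁₂_zero₂₁_le B C)

end Matrix

lemma toEuclideanCLM_projMat {n : ℕ} (V : Submodule ℝ (EuclideanSpace ℝ (Fin n))) :
    toEuclideanCLM (n := Fin n) (𝕜 := ℝ) (projMat V) = V.starProjection := by
  apply ContinuousLinearMap.coe_injective
  rw [coe_toEuclideanCLM_eq_toEuclideanLin, projMat, LinearEquiv.apply_symm_apply]
  rfl

lemma isStarProjection_projMat {n : ℕ} (V : Submodule ℝ (EuclideanSpace ℝ (Fin n))) :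
    IsStarProjection (projMat V) := by
  have hinj : Injective (toEuclideanCLM (n := Fin n) (𝕜 := ℝ)) := EquivLike.injective _
  have hS := isStarProjection_starProjection (U := V)
  refine ⟨hinj ?_, hinj ?_⟩
  · rw [map_mul, toEuclideanCLM_projMat]; exact hS.isIdempotentElem
  · rw [map_star, toEuclideanCLM_projMat]; exact hS.isSelfAdjoint

lemma projMat_transpose {n : ℕ} (V : Submodule ℝ (EuclideanSpace ℝ (Fin n))) :
    (projMat V)ᵀ = projMat V := by
  rw [← conjTranspose_eq_transpose_of_trivial, ← star_eq_conjTranspose]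
  exact (isStarProjection_projMat V).isSelfAdjoint

section TangentProjection

variable {p q : ℕ}

lemma tanProj_add (N A B : Matrix (Fin p) (Fin q) ℝ) :
    tanProj N (A + B) = tanProj N A + tanProj N B := by
  simp only [tanProj, Matrix.mul_add, Matrix.add_mul]
  abel

lemma tanProj_tanProj (N M : Matrix (Fin p) (Fin q) ℝ) :
    tanProj N (tanProj N M) = tanProj N M := by
  have hP := (isStarProjection_projMat (colSpace N)).isIdempotentElem.eq
  have hQ := (isStarProjection_projMat (colSpace Nᵀ)).isIdempotentElem.eq
  have hQ' : ∀ X : Matrix (Fin p) (Fin q) ℝ,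
      X * projMat (colSpace Nᵀ) * projMat (colSpace Nᵀ) = X * projMat (colSpace Nᵀ) := by
    intro X; rw [Matrix.mul_assoc, hQ]
  simp only [tanProj, Matrix.mul_add, Matrix.mul_sub, Matrix.add_mul, Matrix.sub_mul,
    ← Matrix.mul_assoc, hP, hQ']
  abel

lemma tanProj_isSymm {N M : Matrix (Fin p) (Fin p) ℝ} (hN : N.IsSymm) (hM : M.IsSymm) :
    (tanProj N M).IsSymm := by
  rw [IsSymm, tanProj, hN.eq]
  simp only [transpose_sub, transpose_add, transpose_mul, projMat_transpose,
    hM.eq, Matrix.mul_assoc]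
  abel

lemma norm_tanProj_le (N M : Matrix (Fin p) (Fin q) ℝ) : ‖tanProj N M‖ ≤ 2 * ‖M‖ := by
  set P := projMat (colSpace N)
  set Q := projMat (colSpace Nᵀ)
  have hP := isStarProjection_projMat (colSpace N)
  have hQ := isStarProjection_projMat (colSpace Nᵀ)
  have hsplit : tanProj N M = P * M + (1 - P) * M * Q := by
    simp only [tanProj, Matrix.sub_mul, Matrix.one_mul]
    abel
  rw [hsplit]
  calc _ ≤ ‖P‖ * ‖M‖ + ‖1 - P‖ * ‖M‖ * ‖Q‖ :=
        (norm_add_le _ _).trans (add_le_add (l2_opNorm_mul _ _)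
          ((l2_opNorm_mul _ _).trans
            (mul_le_mul_of_nonneg_right (l2_opNorm_mul _ _) (norm_nonneg _))))
    _ ≤ 1 * ‖M‖ + 1 * ‖M‖ * 1 := by
        gcongr
        exacts [hP.norm_le, hP.one_sub.norm_le, hQ.norm_le]
    _ = 2 * ‖M‖ := by ring

end TangentProjection

section EntrywiseSupNorm

variable {m n : Type*} [Fintype m] [Fintype n]

lemma abs_le_linf (M : Matrix m n ℝ) (i : m) (j : n) : |M i j| ≤ linf M :=
  (le_ciSup (Set.finite_range fun j => |M i j|).bddAbove j).trans
    (le_ciSup (Set.finite_range fun i => ⨆ j, |M i j|).bddAbove i)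

lemma linf_le {M : Matrix m n ℝ} {c : ℝ} (hc : 0 ≤ c) (h : ∀ i j, |M i j| ≤ c) : linf M ≤ c :=
  Real.iSup_le (fun i => Real.iSup_le (h i) hc) hc

lemma linf_nonneg (M : Matrix m n ℝ) : 0 ≤ linf M :=
  Real.iSup_nonneg fun _ => Real.iSup_nonneg fun _ => abs_nonneg _

lemma linf_add_le (A B : Matrix m n ℝ) : linf (A + B) ≤ linf A + linf B :=
  linf_le (add_nonneg (linf_nonneg A) (linf_nonneg B)) fun i j =>
    (abs_add_le _ _).trans (add_le_add (abs_le_linf A i j) (abs_le_linf B i j))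

lemma linf_neg (M : Matrix m n ℝ) : linf (-M) = linf M := by
  simp only [linf, Matrix.neg_apply, abs_neg]

lemma linf_le_l2_opNorm [DecidableEq m] [DecidableEq n] (M : Matrix m n ℝ) : linf M ≤ ‖M‖ :=
  linf_le (norm_nonneg M) (abs_apply_le_l2_opNorm M)

end EntrywiseSupNorm

section SupportProjection

variable {p : ℕ}

lemma suppProj_add (S A B : Matrix (Fin p) (Fin p) ℝ) :
    suppProj S (A + B) = suppProj S A + suppProj S B := by
  ext i j
  simp only [suppProj, of_apply, Matrix.add_apply]
  split_ifs <;> simp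

lemma suppProj_suppProj (S A : Matrix (Fin p) (Fin p) ℝ) :
    suppProj S (suppProj S A) = suppProj S A := by
  ext i j
  simp only [suppProj, of_apply]
  split_ifs <;> rfl

lemma suppProj_isSymm {S A : Matrix (Fin p) (Fin p) ℝ} (hS : S.IsSymm) (hA : A.IsSymm) :
    (suppProj S A).IsSymm := by
  ext i j
  simp only [suppProj, transpose_apply, of_apply, hS.apply, hA.apply]

lemma linf_suppProj_le (S A : Matrix (Fin p) (Fin p) ℝ) : linf (suppProj S A) ≤ linf A :=
  linf_le (linf_nonneg A) fun i j => by
    simp only [suppProj, of_apply]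
    split_ifs
    · simpa using linf_nonneg A
    · exact abs_le_linf A i j

end SupportProjection

section Phi

variable {p q : ℕ} {δ γ : ℝ}

lemma le_Phi₁ (Z : Quad p q) : linf Z.1 / δ ≤ Phi δ γ Z :=
  le_max_of_le_left (le_max_left _ _)

lemma le_Phi₂ (Z : Quad p q) : ‖Z.2.1‖ ≤ Phi δ γ Z :=
  le_max_of_le_left (le_max_right _ _)

lemma le_Phi₃ (Z : Quad p q) : ‖Z.2.2.1‖ / γ ≤ Phi δ γ Z :=
  le_max_of_le_right (le_max_left _ _)

lemma le_Phi₄ (Z : Quad p q) : ‖Z.2.2.2‖ ≤ Phi δ γ Z :=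
  le_max_of_le_right (le_max_right _ _)

lemma Phi_le {Z : Quad p q} {c : ℝ} (h₁ : linf Z.1 / δ ≤ c) (h₂ : ‖Z.2.1‖ ≤ c)
    (h₃ : ‖Z.2.2.1‖ / γ ≤ c) (h₄ : ‖Z.2.2.2‖ ≤ c) : Phi δ γ Z ≤ c :=
  max_le (max_le h₁ h₂) (max_le h₃ h₄)

lemma Phi_nonneg (Z : Quad p q) : 0 ≤ Phi δ γ Z :=
  (norm_nonneg _).trans (le_Phi₄ Z)

lemma Phi_neg (Z : Quad p q) : Phi δ γ (-Z) = Phi δ γ Z := by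
  simp only [Phi, Prod.fst_neg, Prod.snd_neg, linf_neg, sNorm_eq_l2_opNorm, norm_neg]

lemma Phi_add_le (hδ : 0 ≤ δ) (hγ : 0 ≤ γ) (X Y : Quad p q) :
    Phi δ γ (X + Y) ≤ Phi δ γ X + Phi δ γ Y := by
  refine Phi_le ?_ ?_ ?_ ?_
  · calc linf (X.1 + Y.1) / δ ≤ linf X.1 / δ + linf Y.1 / δ := by
          rw [← add_div]; gcongr; exact linf_add_le _ _
      _ ≤ _ := add_le_add (le_Phi₁ X) (le_Phi₁ Y)
  · exact (norm_add_le _ _).trans (add_le_add (le_Phi₂ X) (le_Phi₂ Y))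
  · calc ‖X.2.2.1 + Y.2.2.1‖ / γ ≤ ‖X.2.2.1‖ / γ + ‖Y.2.2.1‖ / γ := by
          rw [← add_div]; gcongr; exact norm_add_le _ _
      _ ≤ _ := add_le_add (le_Phi₃ X) (le_Phi₃ Y)
  · exact (norm_add_le _ _).trans (add_le_add (le_Phi₄ X) (le_Phi₄ Y))

lemma Phi_sub_le (hδ : 0 ≤ δ) (hγ : 0 ≤ γ) (X Y : Quad p q) :
    Phi δ γ (X - Y) ≤ Phi δ γ X + Phi δ γ Y := by
  simpa only [sub_eq_add_neg, Phi_neg] using Phi_add_le hδ hγ X (-Y)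

lemma Phi_projHstar_le (hδ : 0 ≤ δ) (hγ : 0 ≤ γ) (S L : Matrix (Fin p) (Fin p) ℝ)
    (K : Matrix (Fin p) (Fin q) ℝ) (Z : Quad p q) :
    Phi δ γ (projHstar S L K Z) ≤ 2 * Phi δ γ Z := by
  have hZ : 0 ≤ Phi δ γ Z := Phi_nonneg Z
  refine Phi_le ?_ ?_ ?_ ?_
  · calc linf (suppProj S Z.1) / δ ≤ linf Z.1 / δ := by gcongr; exact linf_suppProj_le _ _
      _ ≤ 2 * Phi δ γ Z := by linarith [le_Phi₁ (δ := δ) (γ := γ) Z]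
  · exact (norm_tanProj_le _ _).trans (by linarith [le_Phi₂ (δ := δ) (γ := γ) Z])
  · calc ‖tanProj K Z.2.2.1‖ / γ ≤ 2 * (‖Z.2.2.1‖ / γ) := by
          rw [mul_div_assoc']; gcongr; exact norm_tanProj_le _ _
      _ ≤ 2 * Phi δ γ Z := by linarith [le_Phi₃ (δ := δ) (γ := γ) Z]
  · exact (le_Phi₄ (δ := δ) (γ := γ) Z).trans (by linarith)

lemma Phi_le_of_forall_le (hδ : 0 ≤ δ) {Z : Quad p q} {r : ℝ} (h₁ : linf Z.1 ≤ r)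
    (h₂ : ‖Z.2.1‖ ≤ r) (h₃ : ‖Z.2.2.1‖ ≤ r) (h₄ : ‖Z.2.2.2‖ ≤ r) :
    Phi δ γ Z ≤ max (1 / δ) (max 1 (1 / γ)) * r := by
  have hr : 0 ≤ r := (norm_nonneg _).trans h₂
  have h1δ : 1 / δ ≤ max (1 / δ) (max 1 (1 / γ)) := le_max_left _ _
  have h1 : 1 ≤ max (1 / δ) (max 1 (1 / γ)) := le_max_of_le_right (le_max_left _ _)
  have h1γ : 1 / γ ≤ max (1 / δ) (max 1 (1 / γ)) := le_max_of_le_right (le_max_right _ _)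
  refine Phi_le ?_ (h₂.trans (le_mul_of_one_le_left hr h1)) ?_
    (h₄.trans (le_mul_of_one_le_left hr h1))
  · calc linf Z.1 / δ ≤ 1 / δ * r := by rw [one_div_mul_eq_div]; gcongr
      _ ≤ _ := by gcongr
  · calc ‖Z.2.2.1‖ / γ = 1 / γ * ‖Z.2.2.1‖ := by rw [one_div_mul_eq_div]
      _ ≤ _ := by gcongr

end Phi

section FisherMap

variable {p q : ℕ} {δ γ : ℝ}

lemma calA_add (X Y : Quad p q) : calA (X + Y) = calA X + calA Y := by
  simp only [calA, Prod.fst_add, Prod.snd_add, transpose_add, fromBlocks_add,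
    add_sub_add_comm]

lemma fisherA_add (S : Matrix (Fin p ⊕ Fin q) (Fin p ⊕ Fin q) ℝ) (X Y : Quad p q) :
    fisherA S (X + Y) = fisherA S X + fisherA S Y := by
  simp only [fisherA, calAdag, calA_add, Matrix.mul_add, Matrix.add_mul, Prod.mk_add_mk]
  rfl

lemma projHstar_add (S L : Matrix (Fin p) (Fin p) ℝ) (K : Matrix (Fin p) (Fin q) ℝ)
    (X Y : Quad p q) : projHstar S L K (X + Y) = projHstar S L K X + projHstar S L K Y := by
  simp only [projHstar, Prod.fst_add, Prod.snd_add, suppProj_add, tanProj_add, Prod.mk_add_mk]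

lemma memHstar_projHstar {S L : Matrix (Fin p) (Fin p) ℝ} (K : Matrix (Fin p) (Fin q) ℝ)
    (hS : S.IsSymm) (hL : L.IsSymm) {Z : Quad p q} (h₁ : Z.1.IsSymm) (h₂ : Z.2.1.IsSymm)
    (h₄ : Z.2.2.2.IsSymm) : memHstar S L K (projHstar S L K Z) :=
  ⟨suppProj_isSymm hS h₁, suppProj_suppProj _ _, tanProj_isSymm hL h₂, tanProj_tanProj _ _,
    tanProj_tanProj _ _, h₄⟩

lemma norm_calA_le {Z : Quad p q} (h₁ : Z.1 = 0) (h₄ : Z.2.2.2 = 0) :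
    ‖calA Z‖ ≤ ‖Z.2.1‖ + ‖Z.2.2.1‖ := by
  have hsplit : calA Z = fromBlocks (-Z.2.1) 0 0 0 + fromBlocks 0 Z.2.2.1 Z.2.2.1ᵀ 0 := by
    simp [calA, h₁, h₄, fromBlocks_add]
  rw [hsplit]
  refine (norm_add_le _ _).trans (add_le_add ?_ ?_)
  · simpa using l2_opNorm_fromBlocks_zero₁₂_zero₂₁_le (-Z.2.1) (0 : Matrix (Fin q) (Fin q) ℝ)
  · simpa [← conjTranspose_eq_transpose_of_trivial, l2_opNorm_conjTranspose] using
      l2_opNorm_fromBlocks_zero₁₁_zero₂₂_le Z.2.2.1 Z.2.2.1ᵀ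

lemma Phi_calAdag_le (hδ : 0 ≤ δ) (M : Matrix (Fin p ⊕ Fin q) (Fin p ⊕ Fin q) ℝ) :
    Phi δ γ (calAdag M) ≤ max (1 / δ) (max 1 (1 / γ)) * ‖M‖ :=
  Phi_le_of_forall_le hδ ((linf_le_l2_opNorm _).trans (l2_opNorm_toBlocks₁₁_le M))
    (l2_opNorm_toBlocks₁₁_le M) (l2_opNorm_toBlocks₁₂_le M)
    (l2_opNorm_toBlocks₂₂_le M)

lemma Phi_fisherA_le (hδ : 0 ≤ δ) (S : Matrix (Fin p ⊕ Fin q) (Fin p ⊕ Fin q) ℝ) (Z : Quad p q) :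
    Phi δ γ (fisherA S Z) ≤ max (1 / δ) (max 1 (1 / γ)) * (‖S‖ ^ 2 * ‖calA Z‖) := by
  refine (Phi_calAdag_le hδ _).trans (mul_le_mul_of_nonneg_left ?_ (by positivity))
  calc ‖S * calA Z * S‖ ≤ ‖S‖ * ‖calA Z‖ * ‖S‖ :=
        (l2_opNorm_mul _ _).trans
          (mul_le_mul_of_nonneg_right (l2_opNorm_mul _ _) (norm_nonneg _))
    _ = ‖S‖ ^ 2 * ‖calA Z‖ := by ring

end FisherMap

lemma Phi_residual_le {p q : ℕ} {δ γ lam ψ : ℝ} (hδ : 0 ≤ δ) (hlam : 0 ≤ lam) {C : Quad p q}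
    (h₁ : C.1 = 0) (h₄ : C.2.2.2 = 0)
    (hL : ‖C.2.1‖ ≤ lam / (2 * max (1 / δ) (max 1 (1 / γ)) * ψ ^ 2))
    (hK : ‖C.2.2.1‖ ≤ lam / (2 * max (1 / δ) (max 1 (1 / γ)) * ψ ^ 2)) :
    Phi δ γ C ≤ lam / ψ ^ 2 := by
  set m := max (1 / δ) (max 1 (1 / γ))
  have hm : 0 < m := one_pos.trans_le (le_max_of_le_right (le_max_left _ _))
  have hr : 0 ≤ lam / (2 * m * ψ ^ 2) := (norm_nonneg _).trans hL
  calc Phi δ γ C ≤ m * (lam / (2 * m * ψ ^ 2)) :=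
        Phi_le_of_forall_le hδ (linf_le hr (by simp [h₁, hr])) hL hK (by simpa [h₄] using hr)
    _ = lam / ψ ^ 2 / 2 := by field_simp
    _ ≤ lam / ψ ^ 2 := half_le_self (by positivity)

lemma Phi_fisherA_residual_le {p q : ℕ} {δ γ lam : ℝ} (hδ : 0 ≤ δ) (hlam : 0 ≤ lam)
    (S : Matrix (Fin p ⊕ Fin q) (Fin p ⊕ Fin q) ℝ) {C : Quad p q} (h₁ : C.1 = 0)
    (h₄ : C.2.2.2 = 0) (hL : ‖C.2.1‖ ≤ lam / (2 * max (1 / δ) (max 1 (1 / γ)) * ‖S‖ ^ 2))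
    (hK : ‖C.2.2.1‖ ≤ lam / (2 * max (1 / δ) (max 1 (1 / γ)) * ‖S‖ ^ 2)) :
    Phi δ γ (fisherA S C) ≤ lam := by
  set m := max (1 / δ) (max 1 (1 / γ))
  calc Phi δ γ (fisherA S C) ≤ m * (‖S‖ ^ 2 * (2 * (lam / (2 * m * ‖S‖ ^ 2)))) :=
        (Phi_fisherA_le hδ S C).trans (by gcongr; linarith [norm_calA_le h₁ h₄])
    -- `‖S‖` may vanish, so the quotient is bounded by `1` rather than cancelled.
    _ = lam * (m * ‖S‖ ^ 2 / (m * ‖S‖ ^ 2)) := by ring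
    _ ≤ lam := mul_le_of_le_one_right hlam (div_self_le_one _)

lemma Phi_le_of_minGain {p q : ℕ} {δ γ α lam : ℝ} (hδ : 0 ≤ δ) (hγ : 0 ≤ γ) (hα : 0 < α)
    {S L : Matrix (Fin p) (Fin p) ℝ} {K : Matrix (Fin p) (Fin q) ℝ}
    {Sig : Matrix (Fin p ⊕ Fin q) (Fin p ⊕ Fin q) ℝ} {Z C : Quad p q}
    (hgain : α * Phi δ γ Z ≤ Phi δ γ (projHstar S L K (fisherA Sig Z)))
    (hZC : Phi δ γ (fisherA Sig (Z + C)) ≤ 5 * lam) (hC : Phi δ γ (fisherA Sig C) ≤ lam) :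
    Phi δ γ Z ≤ 12 * lam / α := by
  have hsplit : projHstar S L K (fisherA Sig Z) =
      projHstar S L K (fisherA Sig (Z + C)) - projHstar S L K (fisherA Sig C) := by
    rw [fisherA_add, projHstar_add, add_sub_cancel_right]
  rw [le_div_iff₀' hα]
  calc α * Phi δ γ Z ≤ Phi δ γ (projHstar S L K (fisherA Sig Z)) := hgain
    _ ≤ 2 * Phi δ γ (fisherA Sig (Z + C)) + 2 * Phi δ γ (fisherA Sig C) := by
        rw [hsplit]
        exact (Phi_sub_le hδ hγ _ _).trans
          (add_le_add (Phi_projHstar_le hδ hγ _ _ _ _) (Phi_projHstar_le hδ hγ _ _ _ _))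
    _ ≤ 12 * lam := by linarith

theorem stmt_7_general (p q : ℕ)
    (δ γ lam ωY ωYX α : ℝ) (hδ : 0 < δ) (hγ : 0 < γ) (hlam : 0 < lam)
    (hωY : ωY ∈ Set.Ioo (0 : ℝ) 1) (hωYX : ωYX ∈ Set.Ioo (0 : ℝ) 1) (hα : 0 < α)
    (m : ℝ) (hm : m = max (1 / δ) (max 1 (1 / γ)))
    (Sstar Lstar : Matrix (Fin p) (Fin p) ℝ) (hSsymm : Sstar.IsSymm) (hLsymm : Lstar.IsSymm)
    (Kstar : Matrix (Fin p) (Fin q) ℝ)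
    (Θstar : Matrix (Fin p ⊕ Fin q) (Fin p ⊕ Fin q) ℝ)
    (ψ : ℝ) (hψ : ψ = sNorm Θstar⁻¹)
    (hgain : ∀ Z : Quad p q, memHstar Sstar Lstar Kstar Z →
      α * Phi δ γ Z ≤ Phi δ γ (projHstar Sstar Lstar Kstar (fisherA Θstar⁻¹ Z)))
    (Δ : Quad p q)
    (hΔS : Δ.1.IsSymm) (hΔL : Δ.2.1.IsSymm) (hΔO : Δ.2.2.2.IsSymm)
    (ha : ∀ i j, Sstar i j = 0 → Δ.1 i j = 0)
    (hb : sNorm (Δ.2.1 - tanProj Lstar Δ.2.1) ≤ ωY * lam / (2 * m * ψ ^ 2))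
    (hc : sNorm (Δ.2.2.1 - tanProj Kstar Δ.2.2.1) ≤ ωYX * lam / (2 * m * ψ ^ 2))
    (hd : Phi δ γ (fisherA Θstar⁻¹ Δ) ≤ 5 * lam) :
    Phi δ γ Δ ≤ (12 / α + 1 / ψ ^ 2) * lam := by
  subst hm hψ
  set Z := projHstar Sstar Lstar Kstar Δ
  set C := Δ - Z
  have hΔ : Δ = Z + C := (add_sub_cancel Z Δ).symm
  have hC₁ : C.1 = 0 := by
    ext i j
    by_cases h : Sstar i j = 0 <;> simp [C, Z, projHstar, suppProj, h, ha]
  have hC₄ : C.2.2.2 = 0 := sub_self _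
  have hr : 0 ≤ lam / (2 * max (1 / δ) (max 1 (1 / γ)) * ‖Θstar⁻¹‖ ^ 2) := by positivity
  have hCL : ‖C.2.1‖ ≤ lam / (2 * max (1 / δ) (max 1 (1 / γ)) * ‖Θstar⁻¹‖ ^ 2) :=
    hb.trans (by rw [mul_div_assoc]; exact mul_le_of_le_one_left hr hωY.2.le)
  have hCK : ‖C.2.2.1‖ ≤ lam / (2 * max (1 / δ) (max 1 (1 / γ)) * ‖Θstar⁻¹‖ ^ 2) :=
    hc.trans (by rw [mul_div_assoc]; exact mul_le_of_le_one_left hr hωYX.2.le)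
  have hPhiZ : Phi δ γ Z ≤ 12 * lam / α :=
    Phi_le_of_minGain hδ.le hγ.le hα (hgain Z (memHstar_projHstar Kstar hSsymm hLsymm hΔS hΔL hΔO))
      (hΔ ▸ hd) (Phi_fisherA_residual_le hδ.le hlam.le _ hC₁ hC₄ hCL hCK)
  calc Phi δ γ Δ ≤ Phi δ γ Z + Phi δ γ C := hΔ ▸ Phi_add_le hδ.le hγ.le Z C
    _ ≤ 12 * lam / α + lam / ‖Θstar⁻¹‖ ^ 2 :=
        add_le_add hPhiZ (Phi_residual_le hδ.le hlam.le hC₁ hC₄ hCL hCK)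
    _ = (12 / α + 1 / sNorm Θstar⁻¹ ^ 2) * lam := by rw [sNorm_eq_l2_opNorm]; ring

/-- Proposition 1 of the paper: under the minimum-gain condition on the Fisher
information restricted to `ℍ⋆`, any `Δ` that is sparse in the first component, nearly tangent in
the low-rank components, and has `Φ_{δ,γ}(A(Δ)) ≤ 5λ`, satisfies
`Φ_{δ,γ}(Δ) ≤ (12/α + 1/ψ²)·λ`. -/
theorem stmt_7 (p q : ℕ) (hp : 1 ≤ p) (hq : 1 ≤ q)
    (δ γ lam ωY ωYX α : ℝ) (hδ : 0 < δ) (hγ : 0 < γ) (hlam : 0 < lam)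
    (hωY : ωY ∈ Set.Ioo (0 : ℝ) 1) (hωYX : ωYX ∈ Set.Ioo (0 : ℝ) 1) (hα : 0 < α)
    (m : ℝ) (hm : m = max (1 / δ) (max 1 (1 / γ)))
    (Sstar Lstar : Matrix (Fin p) (Fin p) ℝ) (hSsymm : Sstar.IsSymm) (hLsymm : Lstar.IsSymm)
    (Kstar : Matrix (Fin p) (Fin q) ℝ) (Xstar : Matrix (Fin q) (Fin q) ℝ)
    (Θstar : Matrix (Fin p ⊕ Fin q) (Fin p ⊕ Fin q) ℝ)
    (hΘdef : Θstar = Matrix.fromBlocks (Sstar - Lstar) Kstar Kstarᵀ Xstar)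
    (hΘpd : Θstar.PosDef)
    (ψ : ℝ) (hψ : ψ = sNorm Θstar⁻¹)
    (hgain : ∀ Z : Quad p q, memHstar Sstar Lstar Kstar Z →
      α * Phi δ γ Z ≤ Phi δ γ (projHstar Sstar Lstar Kstar (fisherA Θstar⁻¹ Z)))
    (Δ : Quad p q)
    (hΔS : Δ.1.IsSymm) (hΔL : Δ.2.1.IsSymm) (hΔO : Δ.2.2.2.IsSymm)
    (ha : ∀ i j, Sstar i j = 0 → Δ.1 i j = 0)
    (hb : sNorm (Δ.2.1 - tanProj Lstar Δ.2.1) ≤ ωY * lam / (2 * m * ψ ^ 2))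
    (hc : sNorm (Δ.2.2.1 - tanProj Kstar Δ.2.2.1) ≤ ωYX * lam / (2 * m * ψ ^ 2))
    (hd : Phi δ γ (fisherA Θstar⁻¹ Δ) ≤ 5 * lam) :
    Phi δ γ Δ ≤ (12 / α + 1 / ψ ^ 2) * lam :=
  stmt_7_general p q δ γ lam ωY ωYX α hδ hγ hlam hωY hωYX hα m hm Sstar Lstar hSsymm hLsymm Kstar
    Θstar ψ hψ hgain Δ hΔS hΔL hΔO ha hb hc hd
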